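/- Let M₁ and M₂ be pointed metric spaces, let M = M₁ ∐ M₂ be their metric sum, and let Y be a real Banach space. If the pair (M, Y) has the Lip-BPB property for Lipschitz compact maps, then both pairs (M₁, Y) and (M₂, Y) have the Lip-BPB property for Lipschitz compact maps. -/
import Mathlib


open Set Metric NNReal MeasureTheory

/-- A Lipschitz map vanishing at the base point `z`, i.e. an element of `Lip₀(M,Y)`. -/
def IsLip0 {M Y : Type*} [MetricSpace M] [NormedAddCommGroup Y]
    (z : M) (F : M → Y) : Prop :=
  (∃ K : ℝ≥0, LipschitzWith K F) ∧ F z = 0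

/-- The Lipschitz norm `‖F‖_L = sup {‖F p - F q‖ / d(p,q) : p ≠ q}`. -/
noncomputable def lipNorm {M Y : Type*} [MetricSpace M] [NormedAddCommGroup Y]
    (F : M → Y) : ℝ :=
  sSup {r : ℝ | ∃ p q : M, p ≠ q ∧ r = ‖F p - F q‖ / dist p q}

/-- `F` strongly attains its norm. -/
def StronglyAttains {M Y : Type*} [MetricSpace M] [NormedAddCommGroup Y]
    (F : M → Y) : Prop :=
  ∃ p q : M, p ≠ q ∧ ‖F p - F q‖ = lipNorm F * dist p q

/-- `F` is Lipschitz compact: its Lipschitz image is relatively compact. -/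
def IsLipCompact {M Y : Type*} [MetricSpace M] [NormedAddCommGroup Y] [NormedSpace ℝ Y]
    (F : M → Y) : Prop :=
  IsCompact (closure {y : Y | ∃ p q : M, p ≠ q ∧ y = (dist p q)⁻¹ • (F p - F q)})

/-- The pair `(M,Y)` has the Lip-BPB property witnessed by the function `η`. -/
def LipBPBWith (M : Type*) [MetricSpace M] (z : M)
    (Y : Type*) [NormedAddCommGroup Y] (η : ℝ → ℝ) : Prop :=
  (∀ ε > 0, η ε > 0) ∧
  ∀ ε > 0, ∀ F : M → Y, IsLip0 z F → lipNorm F = 1 →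
    ∀ p q : M, p ≠ q → ‖F p - F q‖ > (1 - η ε) * dist p q →
      ∃ G : M → Y, IsLip0 z G ∧ ∃ r s : M, r ≠ s ∧
        ‖G r - G s‖ = dist r s ∧ lipNorm G = 1 ∧
        lipNorm (fun x => G x - F x) < ε ∧
        (dist p r + dist q s) / dist p q < ε

/-- The pair `(M,Y)` has the Lip-BPB property. -/
def LipBPB (M : Type*) [MetricSpace M] (z : M)
    (Y : Type*) [NormedAddCommGroup Y] : Prop :=
  ∃ η : ℝ → ℝ, LipBPBWith M z Y η

/-- The pair `(M,Y)` has the Lip-BPB property for Lipschitz compact maps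
witnessed by the function `η`. -/
def LipBPBCompactWith (M : Type*) [MetricSpace M] (z : M)
    (Y : Type*) [NormedAddCommGroup Y] [NormedSpace ℝ Y] (η : ℝ → ℝ) : Prop :=
  (∀ ε > 0, η ε > 0) ∧
  ∀ ε > 0, ∀ F : M → Y, IsLip0 z F → IsLipCompact F → lipNorm F = 1 →
    ∀ p q : M, p ≠ q → ‖F p - F q‖ > (1 - η ε) * dist p q →
      ∃ G : M → Y, IsLip0 z G ∧ IsLipCompact G ∧ ∃ r s : M, r ≠ s ∧
        ‖G r - G s‖ = dist r s ∧ lipNorm G = 1 ∧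
        lipNorm (fun x => G x - F x) < ε ∧
        (dist p r + dist q s) / dist p q < ε

/-- The pair `(M,Y)` has the Lip-BPB property for Lipschitz compact maps. -/
def LipBPBCompact (M : Type*) [MetricSpace M] (z : M)
    (Y : Type*) [NormedAddCommGroup Y] [NormedSpace ℝ Y] : Prop :=
  ∃ η : ℝ → ℝ, LipBPBCompactWith M z Y η

/-- `SA(M,Y)` is dense in `Lip₀(M,Y)`. -/
def SADense (M : Type*) [MetricSpace M] (z : M)
    (Y : Type*) [NormedAddCommGroup Y] : Prop :=
  ∀ F : M → Y, IsLip0 z F → ∀ ε > 0,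
    ∃ G : M → Y, IsLip0 z G ∧ StronglyAttains G ∧ lipNorm (fun x => G x - F x) < ε

/-- `SA_K(M,Y)` is dense in `Lipc(M,Y)`. -/
def SAKDense (M : Type*) [MetricSpace M] (z : M)
    (Y : Type*) [NormedAddCommGroup Y] [NormedSpace ℝ Y] : Prop :=
  ∀ F : M → Y, IsLip0 z F → IsLipCompact F → ∀ ε > 0,
    ∃ G : M → Y, IsLip0 z G ∧ IsLipCompact G ∧ StronglyAttains G ∧
      lipNorm (fun x => G x - F x) < ε

/-- `S` (with base point `z₀`) is the metric sum `M₁ ∐ M₂` of the pointed metric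
spaces `(M₁, z₁)` and `(M₂, z₂)`, via the inclusions `e₁`, `e₂`. -/
structure IsMetricSum2 {M₁ M₂ S : Type*} [MetricSpace M₁] [MetricSpace M₂] [MetricSpace S]
    (z₁ : M₁) (z₂ : M₂) (z₀ : S) (e₁ : M₁ → S) (e₂ : M₂ → S) : Prop where
  base₁ : e₁ z₁ = z₀
  base₂ : e₂ z₂ = z₀
  dist₁ : ∀ x y : M₁, dist (e₁ x) (e₁ y) = dist x y
  dist₂ : ∀ x y : M₂, dist (e₂ x) (e₂ y) = dist x y
  dist₁₂ : ∀ (x : M₁) (y : M₂), dist (e₁ x) (e₂ y) = dist x z₁ + dist z₂ y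
  cover : ∀ s : S, (∃ x : M₁, e₁ x = s) ∨ (∃ y : M₂, e₂ y = s)

/-- `S` (with base point `z₀`) is the metric sum `∐_{i ∈ ι} M i` of the family of pointed
metric spaces `(M i, z i)`, via the inclusions `e i`. -/
structure IsMetricSumFamily {ι : Type*} {M : ι → Type*} [∀ i, MetricSpace (M i)]
    {S : Type*} [MetricSpace S]
    (z : ∀ i, M i) (z₀ : S) (e : ∀ i, M i → S) : Prop where
  base : ∀ i, e i (z i) = z₀
  dist_eq : ∀ (i) (x y : M i), dist (e i x) (e i y) = dist x y
  dist_ne : ∀ (i j), i ≠ j → ∀ (x : M i) (y : M j),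
    dist (e i x) (e j y) = dist x (z i) + dist (z j) y
  cover : ∀ s : S, ∃ (i : ι) (x : M i), e i x = s

section Helpers
variable {M Y : Type*} [MetricSpace M] [NormedAddCommGroup Y]

theorem quot_mem_le {F : M → Y} {K : ℝ≥0} (hK : LipschitzWith K F) {r : ℝ}
    (hr : r ∈ {r : ℝ | ∃ p q : M, p ≠ q ∧ r = ‖F p - F q‖ / dist p q}) : r ≤ K := by
  obtain ⟨p, q, hpq, rfl⟩ := hr
  rw [div_le_iff₀ (dist_pos.2 hpq)]
  have := hK.dist_le_mul p q
  rwa [dist_eq_norm] at this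

theorem bddAbove_quotSet {F : M → Y} (hK : ∃ K : ℝ≥0, LipschitzWith K F) :
    BddAbove {r : ℝ | ∃ p q : M, p ≠ q ∧ r = ‖F p - F q‖ / dist p q} := by
  obtain ⟨K, hK⟩ := hK
  exact ⟨K, fun r hr => quot_mem_le hK hr⟩

theorem lipNorm_nonneg (F : M → Y) : 0 ≤ lipNorm F := by
  apply Real.sSup_nonneg
  rintro r ⟨p, q, hpq, rfl⟩
  positivity

theorem lipNorm_le {F : M → Y} {c : ℝ} (hc : 0 ≤ c)
    (h : ∀ p q : M, ‖F p - F q‖ ≤ c * dist p q) : lipNorm F ≤ c := by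
  apply Real.sSup_le _ hc
  rintro r ⟨p, q, hpq, rfl⟩
  rw [div_le_iff₀ (dist_pos.2 hpq)]
  exact h p q

theorem norm_sub_le_of_lipNorm {F : M → Y} (hK : ∃ K : ℝ≥0, LipschitzWith K F)
    (p q : M) : ‖F p - F q‖ ≤ lipNorm F * dist p q := by
  rcases eq_or_ne p q with rfl | hpq
  · simp [mul_nonneg (lipNorm_nonneg F) dist_nonneg]
  · have hd : (0:ℝ) < dist p q := dist_pos.2 hpq
    have hmem : ‖F p - F q‖ / dist p q ∈
        {r : ℝ | ∃ p q : M, p ≠ q ∧ r = ‖F p - F q‖ / dist p q} := ⟨p, q, hpq, rfl⟩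
    have hle := le_csSup (bddAbove_quotSet hK) hmem
    calc ‖F p - F q‖ = (‖F p - F q‖ / dist p q) * dist p q := by field_simp
    _ ≤ lipNorm F * dist p q := mul_le_mul_of_nonneg_right hle hd.le

end Helpers

theorem IsMetricSum2.symm' {M₁ M₂ S : Type*} [MetricSpace M₁] [MetricSpace M₂] [MetricSpace S]
    {z₁ : M₁} {z₂ : M₂} {z₀ : S} {e₁ : M₁ → S} {e₂ : M₂ → S}
    (h : IsMetricSum2 z₁ z₂ z₀ e₁ e₂) : IsMetricSum2 z₂ z₁ z₀ e₂ e₁ where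
  base₁ := h.base₂
  base₂ := h.base₁
  dist₁ := h.dist₂
  dist₂ := h.dist₁
  dist₁₂ := fun y x => by
    rw [dist_comm, h.dist₁₂, dist_comm x z₁, dist_comm z₂ y]; ring
  cover := fun s => (h.cover s).symm

theorem lipBPBCompact_side {M₁ M₂ S Y : Type*}
    [MetricSpace M₁] [MetricSpace M₂] [MetricSpace S]
    [NormedAddCommGroup Y] [NormedSpace ℝ Y]
    {z₁ : M₁} {z₂ : M₂} {z₀ : S} {e₁ : M₁ → S} {e₂ : M₂ → S}
    (hsum : IsMetricSum2 z₁ z₂ z₀ e₁ e₂)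
    (h : LipBPBCompact S z₀ Y) : LipBPBCompact M₁ z₁ Y := by
  obtain ⟨η, hηpos, hη⟩ := h
  refine ⟨fun ε => η (min ε 1), fun ε hε => hηpos _ (lt_min hε one_pos), ?_⟩
  intro ε hε F hF0 hFc hFn p q hpq hbpb
  set ε₀ := min ε 1 with hε₀def
  have hε₀pos : 0 < ε₀ := lt_min hε one_pos
  have hε₀1 : ε₀ ≤ 1 := min_le_right _ _
  have hε₀ε : ε₀ ≤ ε := min_le_left _ _
  have hdpq : (0:ℝ) < dist p q := dist_pos.2 hpq
  have hinj : Function.Injective e₁ := by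
    intro x y hxy
    have hd := hsum.dist₁ x y
    rw [hxy, dist_self] at hd
    exact eq_of_dist_eq_zero hd.symm
  obtain ⟨⟨K, hKF⟩, hFz⟩ := hF0
  -- the extension of F to S by zero
  set Fhat : S → Y := Function.extend e₁ F (fun _ => 0) with hFhatdef
  have hF1 : ∀ x, Fhat (e₁ x) = F x := fun x => hinj.extend_apply F _ x
  have hF2 : ∀ y, Fhat (e₂ y) = 0 := by
    intro y
    rcases em (∃ x, e₁ x = e₂ y) with ⟨x, hx⟩ | hne
    · have hd : dist x z₁ + dist z₂ y = 0 := by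
        rw [← hsum.dist₁₂, hx, dist_self]
      have hx1 : x = z₁ := eq_of_dist_eq_zero (by
        have := dist_nonneg (x := x) (y := z₁)
        have := dist_nonneg (x := z₂) (y := y)
        linarith)
      rw [← hx, hF1, hx1, hFz]
    · exact Function.extend_apply' F (fun _ => 0) (e₂ y) hne
  have hle1 : ∀ a b : M₁, ‖F a - F b‖ ≤ dist a b := by
    intro a b
    have := norm_sub_le_of_lipNorm ⟨K, hKF⟩ a b
    rwa [hFn, one_mul] at this
  have hFhatle : ∀ u v : S, ‖Fhat u - Fhat v‖ ≤ dist u v := by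
    have half : ∀ (a : M₁) (b : M₂), ‖Fhat (e₁ a) - Fhat (e₂ b)‖ ≤ dist (e₁ a) (e₂ b) := by
      intro a b
      rw [hF1, hF2, sub_zero, hsum.dist₁₂]
      have h1 : ‖F a‖ = ‖F a - F z₁‖ := by rw [hFz, sub_zero]
      have h2 := hle1 a z₁
      have h3 : (0:ℝ) ≤ dist z₂ b := dist_nonneg
      linarith [h1 ▸ h2]
    intro u v
    rcases hsum.cover u with ⟨a, rfl⟩ | ⟨a, rfl⟩ <;> rcases hsum.cover v with ⟨b, rfl⟩ | ⟨b, rfl⟩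
    · rw [hF1, hF1, hsum.dist₁]; exact hle1 a b
    · exact half a b
    · rw [norm_sub_rev, dist_comm]; exact half b a
    · rw [hF2, hF2, sub_zero, norm_zero]; exact dist_nonneg
  have hKFhat : LipschitzWith 1 Fhat := by
    apply LipschitzWith.of_dist_le_mul
    intro u v
    rw [dist_eq_norm, NNReal.coe_one, one_mul]
    exact hFhatle u v
  have hFhat0 : IsLip0 z₀ Fhat := ⟨⟨1, hKFhat⟩, by rw [← hsum.base₁, hF1, hFz]⟩
  have hFhatn : lipNorm Fhat = 1 := by
    refine le_antisymm (lipNorm_le zero_le_one fun u v => by rw [one_mul]; exact hFhatle u v) ?_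
    have hsub : {r : ℝ | ∃ a b : M₁, a ≠ b ∧ r = ‖F a - F b‖ / dist a b} ⊆
        {r : ℝ | ∃ u v : S, u ≠ v ∧ r = ‖Fhat u - Fhat v‖ / dist u v} := by
      rintro r ⟨a, b, hab, rfl⟩
      exact ⟨e₁ a, e₁ b, fun hc => hab (hinj hc), by rw [hF1, hF1, hsum.dist₁]⟩
    have hmono : lipNorm F ≤ lipNorm Fhat :=
      csSup_le_csSup (bddAbove_quotSet ⟨1, hKFhat⟩) ⟨_, p, q, hpq, rfl⟩ hsub
    rw [hFn] at hmono; exact hmono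
  -- compactness of Fhat
  have hFhatc : IsLipCompact Fhat := by
    set C := closure {y : Y | ∃ a b : M₁, a ≠ b ∧ y = (dist a b)⁻¹ • (F a - F b)} with hCdef
    have hC : IsCompact C := hFc
    set D := (fun z : ℝ × Y => z.1 • z.2) '' (Icc (-1:ℝ) 1 ×ˢ (C ∪ {0})) with hDdef
    have hD : IsCompact D :=
      ((isCompact_Icc).prod (hC.union isCompact_singleton)).image
        (continuous_fst.smul continuous_snd)
    have hzero : (0:Y) ∈ D := ⟨(0, 0), ⟨by norm_num, Or.inr rfl⟩, by simp⟩
    have hmix : ∀ (a : M₁) (b : M₂), ∀ σ : ℝ, σ = 1 ∨ σ = -1 →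
        (σ * (dist a z₁ + dist z₂ b)⁻¹) • F a ∈ D := by
      intro a b σ hσ
      rcases eq_or_ne a z₁ with rfl | ha
      · rw [hFz, smul_zero]; exact hzero
      · have hd : (0:ℝ) < dist a z₁ := dist_pos.2 ha
        have hde : (0:ℝ) < dist a z₁ + dist z₂ b := by
          have : (0:ℝ) ≤ dist z₂ b := dist_nonneg
          linarith
        refine ⟨(σ * (dist a z₁ / (dist a z₁ + dist z₂ b)),
            (dist a z₁)⁻¹ • (F a - F z₁)), ⟨?_, Or.inl (subset_closure ⟨a, z₁, ha, rfl⟩)⟩, ?_⟩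
        · have ht0 : 0 ≤ dist a z₁ / (dist a z₁ + dist z₂ b) := by positivity
          have ht1 : dist a z₁ / (dist a z₁ + dist z₂ b) ≤ 1 := by
            rw [div_le_one hde]; linarith [dist_nonneg (x := z₂) (y := b)]
          rcases hσ with rfl | rfl <;> constructor <;> simp <;> linarith
        · simp only [smul_smul, hFz, sub_zero]
          congr 1
          field_simp
    refine hD.of_isClosed_subset isClosed_closure (closure_minimal ?_ hD.isClosed)
    rintro y ⟨u, v, huv, rfl⟩
    rcases hsum.cover u with ⟨a, rfl⟩ | ⟨a, rfl⟩ <;>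
      rcases hsum.cover v with ⟨b, rfl⟩ | ⟨b, rfl⟩
    · have hab : a ≠ b := fun hc => huv (by rw [hc])
      have heq : (dist (e₁ a) (e₁ b))⁻¹ • (Fhat (e₁ a) - Fhat (e₁ b)) =
          (dist a b)⁻¹ • (F a - F b) := by rw [hF1, hF1, hsum.dist₁]
      rw [heq]
      exact ⟨(1, (dist a b)⁻¹ • (F a - F b)),
        ⟨⟨by norm_num, le_refl 1⟩, Or.inl (subset_closure ⟨a, b, hab, rfl⟩)⟩, one_smul _ _⟩
    · have heq : (dist (e₁ a) (e₂ b))⁻¹ • (Fhat (e₁ a) - Fhat (e₂ b)) =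
          ((1:ℝ) * (dist a z₁ + dist z₂ b)⁻¹) • F a := by
        rw [hF1, hF2, sub_zero, hsum.dist₁₂, one_mul]
      rw [heq]
      exact hmix a b 1 (Or.inl rfl)
    · have heq : (dist (e₂ a) (e₁ b))⁻¹ • (Fhat (e₂ a) - Fhat (e₁ b)) =
          ((-1:ℝ) * (dist b z₁ + dist z₂ a)⁻¹) • F b := by
        rw [hF1, hF2, zero_sub, dist_comm, hsum.dist₁₂, neg_one_mul, neg_smul, smul_neg]
      rw [heq]
      exact hmix b a (-1) (Or.inr rfl)
    · rw [hF2, hF2, sub_self, smul_zero]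
      exact hzero
  -- apply the BPB property of S
  have hgt : ‖Fhat (e₁ p) - Fhat (e₁ q)‖ > (1 - η ε₀) * dist (e₁ p) (e₁ q) := by
    rw [hF1, hF1, hsum.dist₁]
    exact hbpb
  obtain ⟨G, hG0, hGcpt, r, s, hrs, hGatt, hGn, hGdiff, hGdist⟩ :=
    hη ε₀ hε₀pos Fhat hFhat0 hFhatc hFhatn (e₁ p) (e₁ q)
      (fun hc => hpq (hinj hc)) hgt
  have hGle : ∀ u v : S, ‖G u - G v‖ ≤ dist u v := by
    intro u v
    have := norm_sub_le_of_lipNorm hG0.1 u v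
    rwa [hGn, one_mul] at this
  have hsumdist : dist (e₁ p) r + dist (e₁ q) s < ε₀ * dist p q := by
    have hd : (0:ℝ) < dist (e₁ p) (e₁ q) := by rw [hsum.dist₁]; exact hdpq
    have := (div_lt_iff₀ hd).1 hGdist
    rwa [hsum.dist₁] at this
  obtain ⟨⟨KG, hKG⟩, hGz⟩ := hG0
  -- the key construction: a good pair inside M₁
  have key : ∀ r' s' : M₁, r' ≠ s' → ‖G (e₁ r') - G (e₁ s')‖ = dist r' s' →
      dist p r' ≤ dist (e₁ p) r → dist q s' ≤ dist (e₁ q) s →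
      ∃ G' : M₁ → Y, IsLip0 z₁ G' ∧ IsLipCompact G' ∧ ∃ a b : M₁, a ≠ b ∧
        ‖G' a - G' b‖ = dist a b ∧ lipNorm G' = 1 ∧
        lipNorm (fun x => G' x - F x) < ε ∧
        (dist p a + dist q b) / dist p q < ε := by
    intro r' s' hr's' hatt hdr hds
    have hle : ∀ x y : M₁, ‖G (e₁ x) - G (e₁ y)‖ ≤ dist x y := by
      intro x y
      have := hGle (e₁ x) (e₁ y)
      rwa [hsum.dist₁] at this
    refine ⟨fun x => G (e₁ x), ⟨⟨KG, ?_⟩, by simp only [hsum.base₁, hGz]⟩, ?_, r', s', hr's',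
      hatt, ?_, ?_, ?_⟩
    · apply LipschitzWith.of_dist_le_mul
      intro x y
      calc dist (G (e₁ x)) (G (e₁ y)) ≤ KG * dist (e₁ x) (e₁ y) := hKG.dist_le_mul _ _
      _ = KG * dist x y := by rw [hsum.dist₁]
    · refine hGcpt.of_isClosed_subset isClosed_closure (closure_minimal ?_ hGcpt.isClosed)
      rintro y ⟨a, b, hab, rfl⟩
      exact subset_closure ⟨e₁ a, e₁ b, fun hc => hab (hinj hc), by rw [hsum.dist₁]⟩
    · refine le_antisymm (lipNorm_le zero_le_one fun x y => by rw [one_mul]; exact hle x y) ?_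
      have hmem : (1:ℝ) ∈ {t : ℝ | ∃ x y : M₁, x ≠ y ∧
          t = ‖G (e₁ x) - G (e₁ y)‖ / dist x y} :=
        ⟨r', s', hr's', by rw [hatt, div_self (dist_pos.2 hr's').ne']⟩
      refine le_csSup ⟨1, ?_⟩ hmem
      rintro t ⟨x, y, hxy, rfl⟩
      rw [div_le_one (dist_pos.2 hxy)]
      exact hle x y
    · have hsub : {t : ℝ | ∃ a b : M₁, a ≠ b ∧
          t = ‖(G (e₁ a) - F a) - (G (e₁ b) - F b)‖ / dist a b} ⊆
          {t : ℝ | ∃ u v : S, u ≠ v ∧ t = ‖(G u - Fhat u) - (G v - Fhat v)‖ / dist u v} := by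
        rintro t ⟨a, b, hab, rfl⟩
        exact ⟨e₁ a, e₁ b, fun hc => hab (hinj hc), by rw [hF1, hF1, hsum.dist₁]⟩
      have hbdd : BddAbove {t : ℝ | ∃ u v : S, u ≠ v ∧
          t = ‖(G u - Fhat u) - (G v - Fhat v)‖ / dist u v} :=
        bddAbove_quotSet (F := fun u => G u - Fhat u) ⟨KG + 1, hKG.sub hKFhat⟩
      have hmono : lipNorm (fun x => G (e₁ x) - F x) ≤ lipNorm (fun u => G u - Fhat u) :=
        csSup_le_csSup hbdd ⟨_, p, q, hpq, rfl⟩ hsub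
      calc lipNorm (fun x => G (e₁ x) - F x) ≤ lipNorm (fun u => G u - Fhat u) := hmono
      _ < ε₀ := hGdiff
      _ ≤ ε := hε₀ε
    · rw [div_lt_iff₀ hdpq]
      calc dist p r' + dist q s' ≤ dist (e₁ p) r + dist (e₁ q) s := add_le_add hdr hds
      _ < ε₀ * dist p q := hsumdist
      _ ≤ ε * dist p q := mul_le_mul_of_nonneg_right hε₀ε dist_nonneg
  -- the contradiction case
  have contra : dist p z₁ ≤ dist (e₁ p) r → dist q z₁ ≤ dist (e₁ q) s → False := by
    intro h1 h2
    have h3 : dist p q ≤ dist p z₁ + dist z₁ q := dist_triangle p z₁ q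
    have h4 : dist z₁ q = dist q z₁ := dist_comm z₁ q
    have h5 : ε₀ * dist p q ≤ dist p q := by nlinarith
    linarith
  -- case analysis on the location of r and s
  rcases hsum.cover r with ⟨a, rfl⟩ | ⟨a, rfl⟩ <;>
    rcases hsum.cover s with ⟨b, rfl⟩ | ⟨b, rfl⟩
  · -- r, s ∈ M₁
    have hab : a ≠ b := fun hc => hrs (by rw [hc])
    refine key a b hab ?_ (le_of_eq (hsum.dist₁ p a).symm) (le_of_eq (hsum.dist₁ q b).symm)
    rw [hGatt, hsum.dist₁]
  · -- r ∈ M₁, s ∈ M₂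
    rcases eq_or_ne a z₁ with ha | ha
    · refine (contra ?_ ?_).elim
      · rw [ha, hsum.dist₁]
      · rw [hsum.dist₁₂]
        linarith [dist_nonneg (x := z₂) (y := b)]
    · have h1 : dist (e₁ a) z₀ = dist a z₁ := by rw [← hsum.base₁, hsum.dist₁]
      have h2 : dist z₀ (e₂ b) = dist z₂ b := by
        rw [← hsum.base₁, hsum.dist₁₂, dist_self, zero_add]
      have h3 : dist (e₁ a) (e₂ b) = dist a z₁ + dist z₂ b := hsum.dist₁₂ a b
      have h4 := dist_triangle (G (e₁ a)) (G z₀) (G (e₂ b))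
      simp only [dist_eq_norm] at h4
      have h5 := hGle (e₁ a) z₀
      have h6 := hGle z₀ (e₂ b)
      rw [h1] at h5
      rw [h2] at h6
      rw [h3] at hGatt
      have hatt' : ‖G (e₁ a) - G z₀‖ = dist a z₁ := by linarith
      refine key a z₁ ha (by rw [hsum.base₁]; exact hatt')
        (le_of_eq (hsum.dist₁ p a).symm) ?_
      rw [hsum.dist₁₂]
      linarith [dist_nonneg (x := z₂) (y := b)]
  · -- r ∈ M₂, s ∈ M₁
    rcases eq_or_ne b z₁ with hb | hb
    · refine (contra ?_ ?_).elim
      · rw [hsum.dist₁₂]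
        linarith [dist_nonneg (x := z₂) (y := a)]
      · rw [hb, hsum.dist₁]
    · have h1 : dist (e₂ a) z₀ = dist z₂ a := by
        rw [← hsum.base₁, dist_comm, hsum.dist₁₂, dist_self, zero_add]
      have h2 : dist z₀ (e₁ b) = dist z₁ b := by rw [← hsum.base₁, hsum.dist₁]
      have h3 : dist (e₂ a) (e₁ b) = dist z₂ a + dist z₁ b := by
        rw [dist_comm, hsum.dist₁₂, dist_comm b z₁]; ring
      have h4 := dist_triangle (G (e₂ a)) (G z₀) (G (e₁ b))
      simp only [dist_eq_norm] at h4
      have h5 := hGle (e₂ a) z₀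
      have h6 := hGle z₀ (e₁ b)
      rw [h1] at h5
      rw [h2] at h6
      rw [h3] at hGatt
      have hatt' : ‖G z₀ - G (e₁ b)‖ = dist z₁ b := by linarith
      refine key z₁ b (fun hc => hb hc.symm) (by rw [hsum.base₁]; exact hatt') ?_
        (le_of_eq (hsum.dist₁ q b).symm)
      rw [hsum.dist₁₂]
      linarith [dist_nonneg (x := z₂) (y := a)]
  · -- r, s ∈ M₂
    refine (contra ?_ ?_).elim
    · rw [hsum.dist₁₂]
      linarith [dist_nonneg (x := z₂) (y := a)]
    · rw [hsum.dist₁₂]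
      linarith [dist_nonneg (x := z₂) (y := b)]


/-- If `S = M₁ ∐ M₂` is the metric sum of two pointed metric spaces and `(S, Y)` has the
Lip-BPB property for Lipschitz compact maps, then so do `(M₁, Y)` and `(M₂, Y)`. -/
theorem lipBPBCompact_of_metricSum2 {M₁ M₂ S Y : Type*}
    [MetricSpace M₁] [CompleteSpace M₁] [MetricSpace M₂] [CompleteSpace M₂]
    [MetricSpace S] [CompleteSpace S]
    [NormedAddCommGroup Y] [NormedSpace ℝ Y] [CompleteSpace Y]
    (z₁ : M₁) (z₂ : M₂) (z₀ : S) (e₁ : M₁ → S) (e₂ : M₂ → S)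
    (hsum : IsMetricSum2 z₁ z₂ z₀ e₁ e₂)
    (h : LipBPBCompact S z₀ Y) :
    LipBPBCompact M₁ z₁ Y ∧ LipBPBCompact M₂ z₂ Y :=
  ⟨lipBPBCompact_side hsum h, lipBPBCompact_side hsum.symm' h⟩
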